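/- arXiv:2012.09964 — 2 statements merged into one kernel-verified Lean document; each statement's English description precedes it below -/
import Mathlib

section
/- Under UP with a given set P of measurement paths: if MSC(v) > k for every non-monitor v ∈ N (in particular, if no set of at most k other non-monitors covers P_v), then G is k-identifiable with respect to P. -/
open SimpleGraph

/-- A measurement path in `G`: a walk together with its two endpoints. -/
abbrev MWalk {V : Type*} (G : SimpleGraph V) := Σ u : V, Σ v : V, G.Walk u v

/-- A measurement path traverses a node `x` iff `x` lies on the walk. -/
def Traverses {V : Type*} {G : SimpleGraph V} (p : MWalk G) (x : V) : Prop :=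
  x ∈ p.2.2.support

/-- Two failure sets `F`, `F'` are distinguishable w.r.t. the collection `P` of
measurement paths: some path of `P` traverses a node of one set but no node of
the other. -/
def Distinguishable {V : Type*} {G : SimpleGraph V} (P : Set (MWalk G))
    (F F' : Set V) : Prop :=
  (∃ p ∈ P, (∃ x ∈ F, Traverses p x) ∧ ∀ x ∈ F', ¬ Traverses p x) ∨
  (∃ p ∈ P, (∃ x ∈ F', Traverses p x) ∧ ∀ x ∈ F, ¬ Traverses p x)

/-- `k`-identifiability w.r.t. paths `P`, where failure sets range over subsets
of the non-monitor set `Nm`. -/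
def Identifiable {V : Type*} {G : SimpleGraph V} (P : Set (MWalk G))
    (Nm : Set V) (k : ℕ) : Prop :=
  ∀ F F' : Set V, F ⊆ Nm → F' ⊆ Nm → F.ncard ≤ k → F'.ncard ≤ k → F ≠ F' →
    Distinguishable P F F'

/-- CAP measurement paths: all walks whose two endpoints are monitors
(endpoints may coincide, nodes may be revisited). -/
def CAP {V : Type*} (G : SimpleGraph V) (M : Set V) : Set (MWalk G) :=
  { p | p.1 ∈ M ∧ p.2.1 ∈ M }

/-- CSP measurement paths: all simple (cycle-free) paths whose two endpoints
are distinct monitors. -/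
def CSP {V : Type*} (G : SimpleGraph V) (M : Set V) : Set (MWalk G) :=
  { p | p.1 ∈ M ∧ p.2.1 ∈ M ∧ p.1 ≠ p.2.1 ∧ p.2.2.IsPath }

/-- Every connected component of `G − V'` contains at least one monitor. -/
def ComponentsHaveMonitor {V : Type*} (G : SimpleGraph V) (M : Set V)
    (V' : Set V) : Prop :=
  ∀ v : ↥(V'ᶜ), ∃ m : ↥(V'ᶜ), (m : V) ∈ M ∧ (G.induce V'ᶜ).Reachable v m

/-- The auxiliary graph on the non-monitors `Nm` plus a new virtual monitor
`m'` (the vertex `none`), where the monitors in `M'` are used to create the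
virtual links: edges of `G` between non-monitors are kept; `m'` is joined to
each non-monitor adjacent in `G` to some monitor in `M'`; and two non-monitors
each adjacent in `G` to some monitor in `M'` are joined.
`G* = StarGraph G Mᶜ M` and `G_m = StarGraph G Mᶜ (M \ {m})`. -/
def StarGraph {V : Type*} (G : SimpleGraph V) (Nm M' : Set V) :
    SimpleGraph (Option ↥Nm) where
  Adj x y :=
    match x, y with
    | none, none => False
    | none, some u => ∃ m ∈ M', G.Adj (u : V) m
    | some u, none => ∃ m ∈ M', G.Adj (u : V) m
    | some u, some w => (u : V) ≠ (w : V) ∧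
        (G.Adj (u : V) (w : V) ∨
          ((∃ m ∈ M', G.Adj (u : V) m) ∧ ∃ m ∈ M', G.Adj (w : V) m))
  symm := by
    constructor
    rintro (_ | u) (_ | w) h
    · exact h
    · exact h
    · exact h
    · exact ⟨fun e => h.1 e.symm, h.2.imp (fun hh => hh.symm) fun hh => ⟨hh.2, hh.1⟩⟩
  loopless := by
    constructor
    rintro (_ | u) h
    · exact h
    · exact h.1 rfl

/-- A graph `H` is `k`-vertex-connected: it has more than `k` vertices and
removing fewer than `k` vertices leaves it connected. -/
def KConnected {W : Type*} (H : SimpleGraph W) (k : ℕ) : Prop :=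
  k < Nat.card W ∧ ∀ S : Set W, S.ncard < k → (H.induce Sᶜ).Connected

/-- The vertex connectivity `δ(H)`: the largest `k` such that `H` is
`k`-vertex-connected. -/
noncomputable def vertexConnectivity {W : Type*} (H : SimpleGraph W) : ℕ :=
  sSup { k | KConnected H k }

/-- The maximum identifiability: the largest `k ∈ {0, …, |Nm|}` such that the
network is `k`-identifiable w.r.t. `P`. -/
noncomputable def maxIdent {V : Type*} {G : SimpleGraph V} (P : Set (MWalk G))
    (Nm : Set V) : ℕ :=
  sSup { k | k ≤ Nm.ncard ∧ Identifiable P Nm k }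

/-- `MSC(v)`: the minimum cardinality of a set `V' ⊆ Nm \ {v}` of non-monitors
such that every path of `P` traversing `v` traverses some node of `V'`
(`⊤ = ∞` if no such set exists). -/
noncomputable def MSC {V : Type*} {G : SimpleGraph V} (P : Set (MWalk G))
    (Nm : Set V) (v : V) : ℕ∞ :=
  sInf { n : ℕ∞ | ∃ V' : Set V, V' ⊆ Nm \ {v} ∧
    (∀ p ∈ P, Traverses p v → ∃ x ∈ V', Traverses p x) ∧ n = (V'.ncard : ℕ∞) }

/-! If `F ≠ F'`, some `v` lies in one set but not the other, say `v ∈ F \ F'`. The other set has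
at most `k < MSC(v)` non-monitors, so it cannot cover all paths through `v`: a path through `v`
avoiding `F'` distinguishes the two failure sets. -/

section

variable {V : Type*} {G : SimpleGraph V} {P : Set (MWalk G)} {Nm : Set V}

theorem MSC_le_ncard {v : V} {B : Set V} (hB : B ⊆ Nm \ {v})
    (hcov : ∀ p ∈ P, Traverses p v → ∃ x ∈ B, Traverses p x) :
    MSC P Nm v ≤ B.ncard :=
  sInf_le ⟨B, hB, hcov, rfl⟩

theorem exists_traverses_avoiding_of_ncard_lt_MSC {v : V} {B : Set V} (hB : B ⊆ Nm)
    (hvB : v ∉ B) (hlt : (B.ncard : ℕ∞) < MSC P Nm v) :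
    ∃ p ∈ P, Traverses p v ∧ ∀ x ∈ B, ¬ Traverses p x := by
  by_contra! hcov
  have hB' : B ⊆ Nm \ {v} := fun x hx => ⟨hB hx, fun hxv => hvB (Set.eq_of_mem_singleton hxv ▸ hx)⟩
  exact (MSC_le_ncard hB' hcov).not_gt hlt

theorem Distinguishable.symm {F F' : Set V} (h : Distinguishable P F F') :
    Distinguishable P F' F :=
  Or.symm h

theorem distinguishable_of_mem_of_not_mem {F F' : Set V} {v : V} (hF' : F' ⊆ Nm)
    (hlt : (F'.ncard : ℕ∞) < MSC P Nm v) (hvF : v ∈ F) (hvF' : v ∉ F') :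
    Distinguishable P F F' := by
  obtain ⟨p, hp, hpv, havoid⟩ := exists_traverses_avoiding_of_ncard_lt_MSC hF' hvF' hlt
  exact Or.inl ⟨p, hp, ⟨v, hvF, hpv⟩, havoid⟩

theorem identifiable_of_lt_MSC {k : ℕ} (h : ∀ v ∈ Nm, (k : ℕ∞) < MSC P Nm v) :
    Identifiable P Nm k := by
  intro F F' hF hF' hFk hF'k hne
  have hlt : ∀ {A : Set V} {v : V}, A.ncard ≤ k → v ∈ Nm → (A.ncard : ℕ∞) < MSC P Nm v :=
    fun hA hv => lt_of_le_of_lt (by exact_mod_cast hA) (h _ hv)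
  by_cases hsub : F ⊆ F'
  · obtain ⟨v, hvF', hvF⟩ := Set.not_subset.mp fun h' => hne (hsub.antisymm h')
    exact (distinguishable_of_mem_of_not_mem hF (hlt hFk (hF' hvF')) hvF' hvF).symm
  · obtain ⟨v, hvF, hvF'⟩ := Set.not_subset.mp hsub
    exact distinguishable_of_mem_of_not_mem hF' (hlt hF'k (hF hvF)) hvF hvF'

end

theorem stmt_11_general {V : Type*} (G : SimpleGraph V) (M : Set V) (P : Set (MWalk G)) (k : ℕ)
    (h : ∀ v ∈ Mᶜ, (k : ℕ∞) < MSC P Mᶜ v) :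
    Identifiable P Mᶜ k :=
  identifiable_of_lt_MSC h

/-- Sufficient condition for `k`-identifiability under UP: `MSC(v) > k` for
every non-monitor `v`. -/
theorem stmt_11 {V : Type*} [Fintype V] (G : SimpleGraph V) (hG : G.Connected)
    (M : Set V) (hM : M.Nonempty) (P : Set (MWalk G))
    (hP : ∀ p ∈ P, p.1 ∈ M ∧ p.2.1 ∈ M ∧ p.2.2.IsPath) (k : ℕ)
    (h : ∀ v ∈ Mᶜ, (k : ℕ∞) < MSC P Mᶜ v) :
    Identifiable P Mᶜ k :=
  stmt_11_general G M P k h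
end

section
/- Let δ_M = min over monitors m ∈ M of δ(G_m). If min(δ_M, δ(G*) − 1) ≤ σ − 2, then the maximum identifiability of G under CSP satisfies min(δ_M − 1, δ(G*) − 2) ≤ Ω_CSP(G) ≤ min(δ_M, δ(G*) − 1). -/
open SimpleGraph

/-!
The upper bounds come from minimum separators. A minimum separator `S` of `G*` or `G_m` never
contains the virtual monitor (its neighbourhood is a clique), so it is a set of non-monitors that
cuts some non-monitor `u` off from the monitors. For `G*` and `s ∈ S`, the failure sets
`(S \ {s}) ∪ {u}` and `S \ {s}` are indistinguishable: a simple path through `u` crosses `S` on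
both sides of `u`, hence somewhere other than `s`. For `G_m`, the sets `S ∪ {u}` and `S` are
indistinguishable: one side of a simple path through `u` avoids `m`, so it crosses `S`.

For the lower bound, let `u ∉ F`. When `|F| ≤ δ(G*) − 2`, the graph `G* − F` is 2-connected, so
`u` and the virtual monitor are joined by two internally disjoint paths; in `G` they become paths
from `u` to monitors `m₁`, `m₂` that meet only at `u`. If `m₁ ≠ m₂` they form a measurement path
through `u` avoiding `F`. Otherwise `|F| < δ(G_{m₁})` gives a path from `u` to another monitor
avoiding `F`, and a detour along it yields such a measurement path.
-/

namespace SimpleGraph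

variable {W : Type*} {H : SimpleGraph W}

namespace Walk

theorem IsPath.append_of_inter {a b c : W} {p : H.Walk a b} {q : H.Walk b c}
    (hp : p.IsPath) (hq : q.IsPath) (hpq : ∀ x ∈ p.support, x ∈ q.support → x = b) :
    (p.append q).IsPath := by
  rw [isPath_def, support_append]
  refine (isPath_def _ |>.1 hp).append (isPath_def _ |>.1 hq).tail fun x hxp hxq => ?_
  obtain rfl := hpq x hxp (List.mem_of_mem_tail hxq)
  have hq' := isPath_def _ |>.1 hq
  rw [← q.cons_tail_support] at hq'
  exact (List.nodup_cons.1 hq').1 hxq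

theorem IsPath.exists_first_mem {a b : W} {r : H.Walk a b} (hr : r.IsPath) {A : List W}
    (hb : b ∈ A) :
    ∃ x ∈ A, ∃ ρ : H.Walk a x, ρ.IsPath ∧ (∀ y ∈ ρ.support, y ∈ r.support) ∧
      ∀ y ∈ ρ.support, y ∈ A → y = x := by
  classical
  obtain ⟨x, hxA, hx, hfirst⟩ := r.exists_mem_support_forall_mem_support_imp_eq A.toFinset
    ⟨b, by simpa using hb⟩
  exact ⟨x, by simpa using hxA, r.takeUntil x hx, hr.takeUntil hx,
    fun y hy => r.support_takeUntil_subset_support hx hy,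
    fun y hy hyA => hfirst y (by simpa using hyA) hy⟩

variable [DecidableEq W]

theorem IsPath.eq_of_mem_takeUntil_of_mem_dropUntil {a b x y : W} {p : H.Walk a b}
    (hp : p.IsPath) (hx : x ∈ p.support) (h₁ : y ∈ (p.takeUntil x hx).support)
    (h₂ : y ∈ (p.dropUntil x hx).support) : y = x := by
  by_contra hyx
  rw [← p.take_spec hx] at hp
  exact hp.ne_of_mem_support_of_append hyx h₁ h₂ rfl

theorem IsPath.eq_of_end_mem_takeUntil {a b x : W} {p : H.Walk a b} (hp : p.IsPath)
    (hx : x ∈ p.support) (hb : b ∈ (p.takeUntil x hx).support) : b = x :=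
  hp.eq_of_mem_takeUntil_of_mem_dropUntil hx hb (end_mem_support _)

end Walk

open Walk

/-- `D` is `P` up to `x`, followed by `ρ` backwards. -/
theorem exists_detour {u w x y : W} {P Q : H.Walk u w} (hP : P.IsPath)
    (hPQ : ∀ z ∈ P.support, z ∈ Q.support → z = u ∨ z = w) (hx : x ∈ P.support)
    {ρ : H.Walk y x} (hρ : ρ.IsPath) (hwρ : w ∉ ρ.support)
    (hρPQ : ∀ z ∈ ρ.support, z ∈ P.support ∨ z ∈ Q.support → z = x) :
    ∃ D : H.Walk u y, D.IsPath ∧ (∀ z ∈ D.support, z ∈ P.support ∨ z ∈ ρ.support) ∧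
      ∀ z ∈ D.support, z ∈ Q.support → z = u := by
  classical
  have hwx : w ∉ (P.takeUntil x hx).support := fun hw =>
    hwρ (hP.eq_of_end_mem_takeUntil hx hw ▸ ρ.end_mem_support)
  refine ⟨(P.takeUntil x hx).append ρ.reverse,
    (hP.takeUntil hx).append_of_inter hρ.reverse fun z hzP hzρ => ?_, fun z hz => ?_,
    fun z hz hzQ => ?_⟩
  · exact hρPQ z (by simpa using hzρ) (.inl (P.support_takeUntil_subset_support hx hzP))
  · rw [mem_support_append_iff, support_reverse, List.mem_reverse] at hz
    exact hz.imp_left (P.support_takeUntil_subset_support hx ·)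
  · rw [mem_support_append_iff, support_reverse, List.mem_reverse] at hz
    rcases hz with hzP | hzρ
    · exact (hPQ z (P.support_takeUntil_subset_support hx hzP) hzQ).resolve_right
        (by rintro rfl; exact hwx hzP)
    · obtain rfl := hρPQ z hzρ (.inr hzQ)
      exact (hPQ z hx hzQ).resolve_right (by rintro rfl; exact hwρ ρ.end_mem_support)

/-- Whitney's argument, along the walk: the two paths to its penultimate vertex `w₀` are completed
by the last edge and by a detour to `v` avoiding `w₀`. When `u` and `v` are adjacent, both paths
may be the edge `uv`. -/
theorem exists_internallyDisjoint_paths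
    (h : ∀ x a b : W, a ≠ x → b ≠ x → ∃ r : H.Walk a b, x ∉ r.support)
    {u v : W} (w : H.Walk u v) (huv : u ≠ v) :
    ∃ P Q : H.Walk u v, P.IsPath ∧ Q.IsPath ∧
      ∀ z ∈ P.support, z ∈ Q.support → z = u ∨ z = v := by
  classical
  induction w using Walk.concatRec with
  | Hnil => exact absurd rfl huv
  | @Hconcat u w₀ v p e ih =>
    by_cases hw₀v : w₀ = v
    · subst hw₀v
      exact ih huv
    by_cases huw₀ : u = w₀
    · subst huw₀
      refine ⟨e.toWalk, e.toWalk, .of_adj e, .of_adj e, fun z hz _ => ?_⟩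
      simpa using hz
    obtain ⟨P, Q, hP, hQ, hPQ⟩ := ih huw₀
    obtain ⟨r, hr⟩ := h w₀ v u (Ne.symm hw₀v) huw₀
    obtain ⟨x, hxPQ, ρ, hρ, hρr, hfirst⟩ :=
      r.bypass_isPath.exists_first_mem (A := P.support ++ Q.support) (by simp)
    have hw₀ρ : w₀ ∉ ρ.support := fun h => hr (r.support_bypass_subset_support (hρr _ h))
    simp only [List.mem_append] at hxPQ hfirst
    wlog hxP : x ∈ P.support generalizing P Q
    · exact this Q P hQ hP (fun z hzQ hzP => hPQ z hzP hzQ) hxPQ.symm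
        (fun z hz hzPQ => hfirst z hz hzPQ.symm) (hxPQ.resolve_left hxP)
    obtain ⟨D, hD, -, hDQ⟩ := exists_detour hP hPQ hxP hρ hw₀ρ hfirst
    have hvQ : v ∉ Q.support := fun hv => huv (hDQ v D.end_mem_support hv).symm
    refine ⟨D, Q.concat e, hD, hQ.concat hvQ e, fun z hzD hzQ => ?_⟩
    rw [support_concat, List.mem_append, List.mem_singleton] at hzQ
    exact hzQ.imp (hDQ z hzD) id

theorem exists_walk_support_eq_map_of_induce {S : Set W} {a b : ↥S}
    (w : (H.induce S).Walk a b) : ∃ w' : H.Walk a b, w'.support = w.support.map (↑) :=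
  ⟨w.map (Embedding.induce S).toHom, Walk.support_map _ _⟩

theorem exists_walk_avoiding_of_connected_induce {S : Set W} (hS : (H.induce Sᶜ).Connected)
    {a b : W} (ha : a ∉ S) (hb : b ∉ S) : ∃ w : H.Walk a b, ∀ y ∈ w.support, y ∉ S := by
  obtain ⟨w⟩ := hS.preconnected ⟨a, ha⟩ ⟨b, hb⟩
  obtain ⟨w', hw'⟩ := exists_walk_support_eq_map_of_induce w
  refine ⟨w', fun y hy => ?_⟩
  rw [hw', List.mem_map] at hy
  obtain ⟨y, -, rfl⟩ := hy
  exact y.2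

theorem connected_induce_of_forall_walk {S : Set W} {c : W} (hc : c ∉ S)
    (h : ∀ a ∉ S, ∃ w : H.Walk a c, ∀ y ∈ w.support, y ∉ S) : (H.induce Sᶜ).Connected := by
  have hreach (a : ↥Sᶜ) : (H.induce Sᶜ).Reachable a ⟨c, hc⟩ := by
    obtain ⟨w, hw⟩ := h a a.2
    exact ⟨w.induce Sᶜ hw⟩
  have : Nonempty ↥Sᶜ := ⟨⟨c, hc⟩⟩
  exact ⟨fun a b => (hreach a).trans (hreach b).symm⟩

theorem exists_walk_avoiding_of_isClique_neighborSet {z : W}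
    (hz : H.IsClique (H.neighborSet z)) {T : Set W} {a b : W} (w : H.Walk a b)
    (hw : ∀ y ∈ w.support, y ∉ T) (ha : a ≠ z) (hb : b ≠ z) :
    ∃ w' : H.Walk a b, ∀ y ∈ w'.support, y ∉ T ∧ y ≠ z := by
  -- a visit `a₀ → z → c` is shortcut by the edge `a₀ c` of the clique around `z`
  suffices key : ∀ {a b : W} (w : H.Walk a b), (∀ y ∈ w.support, y ∉ T) → b ≠ z →
      ∀ a₀, a₀ ∉ T → a₀ ≠ z → (a₀ = a ∨ a = z ∧ H.Adj z a₀) →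
      ∃ w' : H.Walk a₀ b, ∀ y ∈ w'.support, y ∉ T ∧ y ≠ z from
    key w hw hb a (hw a w.start_mem_support) ha (.inl rfl)
  intro a b w
  induction w with
  | nil =>
    rintro - hb a₀ ha₀T ha₀z (rfl | ⟨rfl, -⟩)
    · exact ⟨nil, by simpa using ⟨ha₀T, ha₀z⟩⟩
    · exact absurd rfl hb
  | @cons a c b e w ih =>
    intro hw hb a₀ ha₀T ha₀z ha₀
    have hwT : ∀ y ∈ w.support, y ∉ T := fun y hy => hw y (by simp [hy])
    by_cases hcz : c = z
    · subst hcz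
      obtain rfl : a₀ = a := ha₀.resolve_right fun h => e.ne h.1
      exact ih hwT hb a₀ ha₀T ha₀z (.inr ⟨rfl, e.symm⟩)
    obtain ⟨w', hw'⟩ := ih hwT hb c (hw c (by simp)) hcz (.inl rfl)
    by_cases ha₀c : a₀ = c
    · subst ha₀c
      exact ⟨w', hw'⟩
    have e' : H.Adj a₀ c := by
      rcases ha₀ with rfl | ⟨rfl, ha₀⟩
      · exact e
      · exact hz ha₀ e ha₀c
    refine ⟨.cons e' w', fun y hy => ?_⟩
    rcases List.mem_cons.1 (support_cons e' w' ▸ hy) with rfl | hy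
    · exact ⟨ha₀T, ha₀z⟩
    · exact hw' y hy

theorem connected_induce_insert_of_isClique_neighborSet {z : W}
    (hz : H.IsClique (H.neighborSet z)) {T : Set W} (hT : (H.induce Tᶜ).Connected)
    {c : W} (hc : c ∉ insert z T) : (H.induce (insert z T)ᶜ).Connected := by
  simp only [Set.mem_insert_iff, not_or] at hc
  refine connected_induce_of_forall_walk (c := c) (by simpa using hc) fun a ha => ?_
  simp only [Set.mem_insert_iff, not_or] at ha
  obtain ⟨w, hw⟩ := exists_walk_avoiding_of_connected_induce hT ha.2 hc.2
  obtain ⟨w', hw'⟩ := exists_walk_avoiding_of_isClique_neighborSet hz w hw ha.1 hc.1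
  exact ⟨w', fun y hy => by simpa [not_or, and_comm] using hw' y hy⟩

theorem KConnected.mono {j k : ℕ} (h : KConnected H k) (hjk : j ≤ k) : KConnected H j :=
  ⟨hjk.trans_lt h.1, fun S hS => h.2 S (hS.trans_le hjk)⟩

theorem KConnected.exists_internallyDisjoint_paths_avoiding {S : Set W}
    (hK : KConnected H (S.ncard + 2)) {u v : W} (hu : u ∉ S) (hv : v ∉ S) (huv : u ≠ v) :
    ∃ P Q : H.Walk u v, P.IsPath ∧ Q.IsPath ∧ (∀ y ∈ P.support, y ∉ S) ∧
      (∀ y ∈ Q.support, y ∉ S) ∧ ∀ z ∈ P.support, z ∈ Q.support → z = u ∨ z = v := by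
  have hcut (x a b : ↥Sᶜ) (hax : a ≠ x) (hbx : b ≠ x) :
      ∃ r : (H.induce Sᶜ).Walk a b, x ∉ r.support := by
    have hxS := hK.2 (insert ↑x S) ((Set.ncard_insert_le _ _).trans_lt (by omega))
    obtain ⟨r, hr⟩ := exists_walk_avoiding_of_connected_induce hxS (a := a) (b := b)
      (by simpa using ⟨Subtype.coe_injective.ne hax, a.2⟩)
      (by simpa using ⟨Subtype.coe_injective.ne hbx, b.2⟩)
    refine ⟨r.induce Sᶜ fun y hy hyS => hr y hy (.inr hyS), ?_⟩
    rw [support_induce, List.mem_attachWith]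
    exact fun hx => hr x hx (.inl rfl)
  obtain ⟨w, hw⟩ := exists_walk_avoiding_of_connected_induce (hK.2 S (by omega)) hu hv
  obtain ⟨P, Q, hP, hQ, hPQ⟩ := exists_internallyDisjoint_paths hcut (w.induce Sᶜ hw)
    (by simpa [Subtype.ext_iff] using huv)
  obtain ⟨P', hP'⟩ := exists_walk_support_eq_map_of_induce P
  obtain ⟨Q', hQ'⟩ := exists_walk_support_eq_map_of_induce Q
  have hS (l : List ↥Sᶜ) : ∀ y ∈ l.map (↑), y ∉ S := by
    simp only [List.mem_map]
    rintro _ ⟨y, -, rfl⟩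
    exact y.2
  refine ⟨P', Q', ?_, ?_, hP' ▸ hS _, hQ' ▸ hS _, ?_⟩
  · rw [isPath_def, hP']
    exact (isPath_def _ |>.1 hP).map Subtype.val_injective
  · rw [isPath_def, hQ']
    exact (isPath_def _ |>.1 hQ).map Subtype.val_injective
  · simp only [hP', hQ', List.mem_map]
    rintro _ ⟨y, hyP, rfl⟩ ⟨y', hyQ, hyy'⟩
    simpa [Subtype.ext_iff] using hPQ y hyP (Subtype.val_injective hyy' ▸ hyQ)

theorem bddAbove_kConnected : BddAbove {k | KConnected H k} :=
  ⟨Nat.card W, fun _ hk => hk.1.le⟩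

theorem le_vertexConnectivity {k : ℕ} (h : KConnected H k) : k ≤ vertexConnectivity H :=
  le_csSup bddAbove_kConnected h

variable [Finite W]

theorem kConnected_vertexConnectivity [Nonempty W] : KConnected H (vertexConnectivity H) :=
  Nat.sSup_mem (s := {k | KConnected H k})
    ⟨0, Nat.card_pos, fun _ hS => absurd hS (Nat.not_lt_zero _)⟩ bddAbove_kConnected

theorem exists_separator (h : vertexConnectivity H + 1 < Nat.card W) :
    ∃ S : Set W, S.ncard = vertexConnectivity H ∧ ¬(H.induce Sᶜ).Connected := by
  have : Nonempty W := (Nat.card_pos_iff.1 (by omega)).1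
  have hnot : ¬KConnected H (vertexConnectivity H + 1) := fun hK =>
    (le_vertexConnectivity hK).not_gt (Nat.lt_succ_self _)
  simp only [KConnected, h, true_and, not_forall] at hnot
  obtain ⟨S, hS, hdisc⟩ := hnot
  refine ⟨S, le_antisymm (Nat.lt_succ_iff.1 hS) ?_, hdisc⟩
  by_contra! hlt
  exact hdisc (kConnected_vertexConnectivity.2 S hlt)

theorem notMem_of_isClique_neighborSet {z : W} (hz : H.IsClique (H.neighborSet z)) {k : ℕ}
    (hK : KConnected H k) {S : Set W} (hS : S.ncard ≤ k) (hSc : Sᶜ.Nonempty)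
    (hdisc : ¬(H.induce Sᶜ).Connected) : z ∉ S := by
  intro hzS
  obtain ⟨c, hc⟩ := hSc
  have hT : (S \ {z}).ncard < k := (Set.ncard_sdiff_singleton_lt_of_mem hzS).trans_le hS
  have hzT : insert z (S \ {z}) = S := by rw [Set.insert_sdiff_singleton, Set.insert_eq_of_mem hzS]
  refine hdisc ?_
  rw [← hzT] at hc ⊢
  exact connected_induce_insert_of_isClique_neighborSet hz (hK.2 _ hT) hc

end SimpleGraph

section StarGraph

open SimpleGraph Walk

variable {V : Type*} {G : SimpleGraph V} {Nm M' : Set V}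

theorem starGraph_isClique_neighborSet :
    (StarGraph G Nm M').IsClique ((StarGraph G Nm M').neighborSet none) := by
  rintro (_ | x) hx (_ | y) hy hxy
  · exact absurd rfl hxy
  · exact absurd hx id
  · exact absurd hy id
  · exact ⟨fun h => hxy (congrArg some (Subtype.ext h)), .inr ⟨hx, hy⟩⟩

theorem exists_starGraph_walk_of_walk {v t : V} (w : G.Walk v t) (ht : t ∉ Nm)
    (hw : ∀ y ∈ w.support, y ∉ Nm → y ∈ M') (hv : v ∈ Nm) :
    ∃ ws : (StarGraph G Nm M').Walk (some ⟨v, hv⟩) none,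
      ∀ x : ↥Nm, some x ∈ ws.support → ↑x ∈ w.support := by
  induction w with
  | nil => exact absurd hv ht
  | @cons v y t e w ih =>
    by_cases hy : y ∈ Nm
    · obtain ⟨ws, hws⟩ := ih ht (fun z hz => hw z (by simp [hz])) hy
      have e' : (StarGraph G Nm M').Adj (some ⟨v, hv⟩) (some ⟨y, hy⟩) := ⟨e.ne, .inl e⟩
      refine ⟨.cons e' ws, fun x hx => ?_⟩
      rcases List.mem_cons.1 (support_cons e' ws ▸ hx) with hx | hx
      · obtain rfl := Option.some_inj.1 hx
        simp
      · exact List.mem_cons_of_mem _ (hws x hx)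
    · have e' : (StarGraph G Nm M').Adj (some ⟨v, hv⟩) none := ⟨y, hw y (by simp) hy, e⟩
      refine ⟨e'.toWalk, fun x hx => ?_⟩
      simp only [Adj.toWalk, support_cons, support_nil, List.mem_cons, Option.some_inj,
        reduceCtorEq, List.not_mem_nil, or_false] at hx
      simp [hx]

theorem exists_path_of_starGraph_walk {a : ↥Nm} (ws : (StarGraph G Nm M').Walk (some a) none) :
    ∃ m ∈ M', ∃ p : G.Walk a m, p.IsPath ∧
      ∀ y ∈ p.support, y = m ∨ ∃ hy : y ∈ Nm, some ⟨y, hy⟩ ∈ ws.support := by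
  suffices key : ∀ {z z'} (ws : (StarGraph G Nm M').Walk z z') (a : ↥Nm), z = some a →
      z' = none → ∃ m ∈ M', ∃ p : G.Walk a m,
        ∀ y ∈ p.support, y = m ∨ ∃ hy : y ∈ Nm, some ⟨y, hy⟩ ∈ ws.support by
    classical
    obtain ⟨m, hm, p, hp⟩ := key ws a rfl rfl
    exact ⟨m, hm, p.bypass, p.bypass_isPath, fun y hy => hp y (p.support_bypass_subset_support hy)⟩
  intro z z' ws
  induction ws with
  | nil => rintro a rfl ⟨⟩
  | @cons z y z' e ws ih =>
    rintro a rfl rfl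
    have ha : some ⟨↑a, a.2⟩ ∈ (cons e ws).support := by simp
    by_cases hmon : ∃ m ∈ M', G.Adj a m
    · obtain ⟨m, hm, hadj⟩ := hmon
      refine ⟨m, hm, hadj.toWalk, fun y hy => ?_⟩
      simp only [Adj.toWalk, support_cons, support_nil, List.mem_cons, List.not_mem_nil,
        or_false] at hy
      rcases hy with rfl | rfl
      · exact .inr ⟨a.2, ha⟩
      · exact .inl rfl
    cases y with
    | none => exact absurd e hmon
    | some b =>
      have hab : G.Adj a b := e.2.resolve_right fun h => hmon h.1
      obtain ⟨m, hm, p, hp⟩ := ih b rfl rfl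
      refine ⟨m, hm, .cons hab p, fun y hy => ?_⟩
      rcases List.mem_cons.1 (support_cons hab p ▸ hy) with rfl | hy
      · exact .inr ⟨a.2, ha⟩
      · exact (hp y hy).imp_right fun ⟨hy, h⟩ => ⟨hy, by simp [h]⟩

end StarGraph

section Monitors

open SimpleGraph Walk

variable {V : Type*} {G : SimpleGraph V} {M : Set V}

theorem ncard_image_some_preimage_coe {F : Set V} (hF : F ⊆ Mᶜ) :
    ((some : ↥Mᶜ → Option ↥Mᶜ) '' ((↑) ⁻¹' F)).ncard = F.ncard := by
  rw [Set.ncard_image_of_injective _ (Option.some_injective _),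
    Set.ncard_preimage_of_injective_subset_range Subtype.val_injective (by rwa [Subtype.range_coe])]

variable [Finite V]

theorem vertexConnectivity_starGraph_le (M' : Set V) :
    vertexConnectivity (StarGraph G Mᶜ M') ≤ Mᶜ.ncard := by
  have h := (kConnected_vertexConnectivity (H := StarGraph G Mᶜ M')).1
  simp only [Finite.card_option, Nat.card_coe_set_eq] at h
  omega

theorem one_le_vertexConnectivity_starGraph (hG : G.Connected) (hM : M.Nonempty)
    (hN : Mᶜ.Nonempty) : 1 ≤ vertexConnectivity (StarGraph G Mᶜ M) := by
  refine le_vertexConnectivity ⟨?_, fun S hS => ?_⟩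
  · simpa [Finite.card_option, Nat.card_coe_set_eq] using hN.ncard_pos
  obtain rfl : S = ∅ := (Set.ncard_eq_zero S.toFinite).1 (by omega)
  obtain ⟨m, hm⟩ := hM
  refine connected_induce_of_forall_walk (c := none) (by simp) fun a _ => ?_
  cases a with
  | none => exact ⟨.nil, by simp⟩
  | some x =>
    obtain ⟨w⟩ := hG.preconnected x m
    obtain ⟨ws, -⟩ := exists_starGraph_walk_of_walk (M' := M) w (not_not.2 hm)
      (fun y _ hy => not_not.1 hy) x.2
    exact ⟨ws, by simp⟩

/-- The virtual monitor lies in no minimum separator of `G_{M'}`, its neighbourhood being a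
clique; so the separator consists of non-monitors. -/
theorem exists_separator_starGraph {M' : Set V}
    (hσ : vertexConnectivity (StarGraph G Mᶜ M') < Mᶜ.ncard) :
    ∃ F ⊆ Mᶜ, F.ncard = vertexConnectivity (StarGraph G Mᶜ M') ∧ ∃ u ∈ Mᶜ, u ∉ F ∧
      ∀ t ∈ M, ∀ w : G.Walk u t, (∀ y ∈ w.support, y ∈ M → y ∈ M') →
        ∃ x ∈ w.support, x ∈ F := by
  set H := StarGraph G Mᶜ M'
  obtain ⟨S, hS, hdisc⟩ := exists_separator (H := H) (by simpa [Nat.card_coe_set_eq] using hσ)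
  have hSc : Sᶜ.Nonempty := by
    rw [Set.nonempty_compl]
    rintro rfl
    simp [Set.ncard_univ, Nat.card_coe_set_eq] at hS
    omega
  have hnone : none ∉ S := notMem_of_isClique_neighborSet starGraph_isClique_neighborSet
    kConnected_vertexConnectivity hS.le hSc hdisc
  obtain ⟨a, haS, hna⟩ : ∃ a ∉ S, ¬∃ w : H.Walk a none, ∀ y ∈ w.support, y ∉ S := by
    by_contra! h
    exact hdisc (connected_induce_of_forall_walk hnone h)
  obtain ⟨u, rfl⟩ : ∃ u, a = some u :=
    Option.ne_none_iff_exists'.1 (by rintro rfl; exact hna ⟨.nil, by simpa using hnone⟩)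
  have hSsome : S ⊆ Set.range some := fun z hz =>
    Option.ne_none_iff_exists.1 (ne_of_mem_of_not_mem hz hnone)
  refine ⟨(↑) '' (some ⁻¹' S), by simp [Set.image_subset_iff], ?_, u, u.2, ?_, ?_⟩
  · rw [Set.ncard_image_of_injective _ Subtype.val_injective,
      Set.ncard_preimage_of_injective_subset_range (Option.some_injective _) hSsome, hS]
  · simp [haS]
  · intro t ht w hw
    by_contra! hwF
    obtain ⟨ws, hws⟩ := exists_starGraph_walk_of_walk w (not_not.2 ht)
      (fun y hy hyN => hw y hy (not_not.1 hyN)) u.2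
    refine hna ⟨ws, fun z hz hzS => ?_⟩
    cases z with
    | none => exact hnone hzS
    | some x => exact hwF x (hws x hz) ⟨x, hzS, rfl⟩

theorem exists_path_to_monitor_avoiding {M' F : Set V} (hF : F ⊆ Mᶜ)
    (hFk : F.ncard < vertexConnectivity (StarGraph G Mᶜ M')) {u : V} (hu : u ∈ Mᶜ)
    (huF : u ∉ F) :
    ∃ m ∈ M', ∃ r : G.Walk u m, r.IsPath ∧ ∀ y ∈ r.support, y = m ∨ (y ∈ Mᶜ ∧ y ∉ F) := by
  have hK := kConnected_vertexConnectivity (H := StarGraph G Mᶜ M')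
  obtain ⟨ws, hws⟩ := exists_walk_avoiding_of_connected_induce
    (hK.2 _ ((ncard_image_some_preimage_coe hF).trans_lt hFk))
    (a := some ⟨u, hu⟩) (b := none) (by simpa using huF) (by simp)
  obtain ⟨m, hm, r, hr, hrws⟩ := exists_path_of_starGraph_walk ws
  refine ⟨m, hm, r, hr, fun y hy => (hrws y hy).imp_right fun ⟨hyN, hyws⟩ => ⟨hyN, ?_⟩⟩
  simpa using hws _ hyws

end Monitors

section Identifiability

variable {V : Type*} {G : SimpleGraph V} {P : Set (MWalk G)} {Nm : Set V}

theorem Identifiable.mono {j k : ℕ} (h : Identifiable P Nm k) (hjk : j ≤ k) :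
    Identifiable P Nm j :=
  fun F F' hF hF' hFj hF'j hne => h F F' hF hF' (hFj.trans hjk) (hF'j.trans hjk) hne

theorem le_maxIdent {k : ℕ} (hk : k ≤ Nm.ncard) (h : Identifiable P Nm k) :
    k ≤ maxIdent P Nm :=
  le_csSup ⟨Nm.ncard, fun _ hj => hj.1⟩ ⟨hk, h⟩

theorem maxIdent_le {U : ℕ} (h : ∀ k, Identifiable P Nm k → k ≤ U) : maxIdent P Nm ≤ U :=
  csSup_le' fun k hk => h k hk.2

theorem identifiable_of_forall_exists_traverses {k : ℕ}
    (h : ∀ F ⊆ Nm, F.ncard ≤ k → ∀ u ∈ Nm, u ∉ F →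
      ∃ p ∈ P, Traverses p u ∧ ∀ x ∈ F, ¬Traverses p x) :
    Identifiable P Nm k := by
  intro F F' hF hF' hFk hF'k hne
  by_cases hFF' : F ⊆ F'
  · obtain ⟨u, huF', huF⟩ := Set.not_subset.1 fun h => hne (hFF'.antisymm h)
    obtain ⟨p, hp, hpu, hpF⟩ := h F hF hFk u (hF' huF') huF
    exact .inr ⟨p, hp, ⟨u, huF', hpu⟩, hpF⟩
  · obtain ⟨u, huF, huF'⟩ := Set.not_subset.1 hFF'
    obtain ⟨p, hp, hpu, hpF'⟩ := h F' hF' hF'k u (hF huF) huF'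
    exact .inl ⟨p, hp, ⟨u, huF, hpu⟩, hpF'⟩

theorem Distinguishable.exists_traverses_of_subset {F F' : Set V}
    (h : Distinguishable P F F') (hF' : F' ⊆ F) :
    ∃ p ∈ P, (∃ x ∈ F \ F', Traverses p x) ∧ ∀ x ∈ F', ¬Traverses p x := by
  rcases h with ⟨p, hp, ⟨x, hxF, hx⟩, hpF'⟩ | ⟨p, -, ⟨x, hxF', hx⟩, hpF⟩
  · exact ⟨p, hp, ⟨x, ⟨hxF, fun hxF' => hpF' x hxF' hx⟩, hx⟩, hpF'⟩
  · exact absurd hx (hpF x (hF' hxF'))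

end Identifiability

section LowerBound

open SimpleGraph Walk

variable {V : Type*} {G : SimpleGraph V} {M : Set V}

theorem exists_mem_csp_of_paths {F : Set V} {u m m' : V} (hm : m ∈ M) (hm' : m' ∈ M)
    (hmm' : m ≠ m') {q : G.Walk u m} {D : G.Walk u m'} (hq : q.IsPath) (hD : D.IsPath)
    (hqD : ∀ y ∈ q.support, y ∈ D.support → y = u) (hqF : ∀ y ∈ q.support, y ∉ F)
    (hDF : ∀ y ∈ D.support, y ∉ F) :
    ∃ p ∈ CSP G M, Traverses p u ∧ ∀ x ∈ F, ¬Traverses p x := by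
  refine ⟨⟨m, m', q.reverse.append D⟩, ⟨hm, hm', hmm', hq.reverse.append_of_inter hD ?_⟩,
    ?_, fun x hxF hx => ?_⟩
  · simpa using hqD
  · simp [Traverses]
  · rcases (mem_support_append_iff _ _).1 hx with hx | hx
    · exact hqF x (by simpa using hx) hxF
    · exact hDF x hx hxF

variable [Finite V]

theorem exists_two_paths_to_monitors {F : Set V} (hF : F ⊆ Mᶜ)
    (hF2 : F.ncard + 2 ≤ vertexConnectivity (StarGraph G Mᶜ M)) {u : V} (hu : u ∈ Mᶜ)
    (huF : u ∉ F) :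
    ∃ m₁ ∈ M, ∃ m₂ ∈ M, ∃ (p : G.Walk u m₁) (q : G.Walk u m₂), p.IsPath ∧ q.IsPath ∧
      (∀ y ∈ p.support, y ∉ F) ∧ (∀ y ∈ q.support, y ∉ F) ∧
      ∀ y ∈ p.support, y ∈ q.support → y = u ∨ (y = m₁ ∧ y = m₂) := by
  classical
  have hK := (kConnected_vertexConnectivity (H := StarGraph G Mᶜ M)).mono
    ((ncard_image_some_preimage_coe hF).symm ▸ hF2)
  obtain ⟨P, Q, hP, hQ, hPF, hQF, hPQ⟩ := hK.exists_internallyDisjoint_paths_avoiding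
    (u := some ⟨u, hu⟩) (v := none) (by simpa using huF) (by simp) (by simp)
  obtain ⟨m₁, hm₁, p, hp, hpP⟩ := exists_path_of_starGraph_walk P
  obtain ⟨m₂, hm₂, q, hq, hqQ⟩ := exists_path_of_starGraph_walk Q
  have hnotF {m : V} (hm : m ∈ M) {R : (StarGraph G Mᶜ M).Walk (some ⟨u, hu⟩) none}
      (hRF : ∀ z ∈ R.support, z ∉ (some '' ((↑) ⁻¹' F) : Set (Option ↥Mᶜ))) {y : V}
      (hy : y = m ∨ ∃ hy : y ∈ Mᶜ, some ⟨y, hy⟩ ∈ R.support) : y ∉ F := by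
    rcases hy with rfl | ⟨hyN, hyR⟩
    · exact fun hyF => hF hyF hm
    · simpa using hRF _ hyR
  refine ⟨m₁, hm₁, m₂, hm₂, p, q, hp, hq, fun y hy => hnotF hm₁ hPF (hpP y hy),
    fun y hy => hnotF hm₂ hQF (hqQ y hy), fun y hyp hyq => ?_⟩
  rcases hpP y hyp, hqQ y hyq with ⟨rfl | ⟨hyN, hyP⟩, rfl | ⟨hyN', hyQ⟩⟩
  · exact .inr ⟨rfl, rfl⟩
  · exact absurd hm₁ hyN'
  · exact absurd hm₂ hyN
  · exact .inl (by simpa using hPQ _ hyP hyQ)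

theorem exists_mem_csp_traverses_avoiding {F : Set V} (hF : F ⊆ Mᶜ)
    (hF2 : F.ncard + 2 ≤ vertexConnectivity (StarGraph G Mᶜ M))
    (hFm : ∀ m ∈ M, F.ncard < vertexConnectivity (StarGraph G Mᶜ (M \ {m}))) {u : V}
    (hu : u ∈ Mᶜ) (huF : u ∉ F) :
    ∃ p ∈ CSP G M, Traverses p u ∧ ∀ x ∈ F, ¬Traverses p x := by
  classical
  obtain ⟨m₁, hm₁, m₂, hm₂, p, q, hp, hq, hpF, hqF, hpq⟩ :=
    exists_two_paths_to_monitors hF hF2 hu huF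
  by_cases hm : m₁ = m₂
  swap
  · exact exists_mem_csp_of_paths hm₂ hm₁ (Ne.symm hm) hq hp
      (fun y hyq hyp => (hpq y hyp hyq).resolve_right fun h => hm (h.1.symm.trans h.2)) hqF hpF
  -- both paths end at the same monitor `m₁`: leave it through `G_{m₁}`
  subst hm
  replace hpq : ∀ y ∈ p.support, y ∈ q.support → y = u ∨ y = m₁ :=
    fun y hyp hyq => (hpq y hyp hyq).imp_right And.left
  obtain ⟨m', hm', r, hr, hrF⟩ := exists_path_to_monitor_avoiding hF (hFm m₁ hm₁) hu huF
  obtain ⟨x, hxpq, ρ, hρ, hρr, hfirst⟩ :=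
    hr.reverse.exists_first_mem (A := p.support ++ q.support) (by simp)
  simp only [support_reverse, List.mem_reverse] at hρr
  simp only [List.mem_append] at hxpq hfirst
  have hρF : ∀ y ∈ ρ.support, y ∉ F := fun y hy hyF => by
    rcases hrF y (hρr y hy) with rfl | h
    · exact hF hyF hm'.1
    · exact h.2 hyF
  have hm₁ρ : m₁ ∉ ρ.support := fun h => by
    rcases hrF m₁ (hρr m₁ h) with rfl | h
    · exact hm'.2 rfl
    · exact h.1 hm₁
  wlog hxp : x ∈ p.support generalizing p q
  · exact this q hq hqF p hp hpF (fun y hyq hyp => hpq y hyp hyq) hxpq.symm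
      (fun z hz hzqp => hfirst z hz hzqp.symm) (hxpq.resolve_left hxp)
  obtain ⟨D, hD, hDpρ, hDq⟩ := exists_detour hp hpq hxp hρ hm₁ρ hfirst
  refine exists_mem_csp_of_paths hm₁ hm'.1 (fun h => hm'.2 h.symm) hq hD
    (fun y hyq hyD => hDq y hyD hyq) hqF fun y hy => ?_
  exact (hDpρ y hy).elim (hpF y) (hρF y)

theorem identifiable_csp {k : ℕ} (hk : k + 2 ≤ vertexConnectivity (StarGraph G Mᶜ M))
    (hkm : ∀ m ∈ M, k < vertexConnectivity (StarGraph G Mᶜ (M \ {m}))) :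
    Identifiable (CSP G M) Mᶜ k :=
  identifiable_of_forall_exists_traverses fun _ hF hFk _ hu huF =>
    exists_mem_csp_traverses_avoiding hF (by omega) (fun m hm => hFk.trans_lt (hkm m hm)) hu huF

end LowerBound

section UpperBound

open SimpleGraph Walk

variable {V : Type*} {G : SimpleGraph V} {M : Set V}

theorem exists_sides_of_mem_csp {p : MWalk G} (hp : p ∈ CSP G M) {u : V}
    (hu : Traverses p u) :
    ∃ m₁ ∈ M, ∃ m₂ ∈ M, m₁ ≠ m₂ ∧ ∃ (w₁ : G.Walk u m₁) (w₂ : G.Walk u m₂),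
      (∀ y ∈ w₁.support, y ∈ w₂.support → y = u) ∧ (∀ y ∈ w₁.support, Traverses p y) ∧
      ∀ y ∈ w₂.support, Traverses p y := by
  classical
  obtain ⟨a, b, w⟩ := p
  obtain ⟨ha, hb, hab, hw⟩ := hp
  refine ⟨a, ha, b, hb, hab, (w.takeUntil u hu).reverse, w.dropUntil u hu,
    fun y h₁ h₂ => hw.eq_of_mem_takeUntil_of_mem_dropUntil hu (by simpa using h₁) h₂,
    fun y hy => w.support_takeUntil_subset_support hu (by simpa using hy),
    fun y hy => w.support_dropUntil_subset_support hu hy⟩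

variable [Finite V]

theorem not_identifiable_csp_vertexConnectivity
    (h1 : 1 ≤ vertexConnectivity (StarGraph G Mᶜ M))
    (hσ : vertexConnectivity (StarGraph G Mᶜ M) < Mᶜ.ncard) :
    ¬Identifiable (CSP G M) Mᶜ (vertexConnectivity (StarGraph G Mᶜ M)) := by
  intro hId
  obtain ⟨F, hF, hFcard, u, hu, huF, hsep⟩ := exists_separator_starGraph (M' := M) hσ
  obtain ⟨s, hs⟩ := Set.nonempty_of_ncard_ne_zero (s := F) (by omega)
  have hcard := Set.ncard_sdiff_singleton_of_mem hs
  obtain ⟨p, hp, ⟨x, hx, hxp⟩, hpF⟩ := (hId (insert u (F \ {s})) (F \ {s})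
    (Set.insert_subset hu (Set.sdiff_subset.trans hF)) (Set.sdiff_subset.trans hF)
    ((Set.ncard_insert_le _ _).trans (by omega)) (by omega)
    fun h => huF (h ▸ Set.mem_insert u _).1).exists_traverses_of_subset (Set.subset_insert _ _)
  obtain rfl : x = u := hx.1.resolve_right hx.2
  -- each side of `p` crosses `F`, at two distinct vertices, so one of them is not `s`
  obtain ⟨m₁, hm₁, m₂, hm₂, -, w₁, w₂, hw₁₂, hw₁p, hw₂p⟩ := exists_sides_of_mem_csp hp hxp
  obtain ⟨x₁, hx₁w, hx₁F⟩ := hsep m₁ hm₁ w₁ fun y _ hy => hy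
  obtain ⟨x₂, hx₂w, hx₂F⟩ := hsep m₂ hm₂ w₂ fun y _ hy => hy
  have hx₁₂ : x₁ ≠ x₂ := by
    rintro rfl
    exact huF (hw₁₂ x₁ hx₁w hx₂w ▸ hx₁F)
  by_cases hx₁s : x₁ = s
  · exact hpF x₂ ⟨hx₂F, fun h => hx₁₂ (hx₁s.trans (Set.mem_singleton_iff.1 h).symm)⟩
      (hw₂p x₂ hx₂w)
  · exact hpF x₁ ⟨hx₁F, hx₁s⟩ (hw₁p x₁ hx₁w)

theorem not_identifiable_csp_vertexConnectivity_diff_add_one {m : V} (hm : m ∈ M)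
    (hσ : vertexConnectivity (StarGraph G Mᶜ (M \ {m})) < Mᶜ.ncard) :
    ¬Identifiable (CSP G M) Mᶜ (vertexConnectivity (StarGraph G Mᶜ (M \ {m})) + 1) := by
  intro hId
  obtain ⟨F, hF, hFcard, u, hu, huF, hsep⟩ := exists_separator_starGraph hσ
  obtain ⟨p, hp, ⟨x, hx, hxp⟩, hpF⟩ := (hId (insert u F) F (Set.insert_subset hu hF) hF
    ((Set.ncard_insert_le _ _).trans (by omega)) (by omega)
    fun h => huF (h ▸ Set.mem_insert u _)).exists_traverses_of_subset (Set.subset_insert _ _)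
  obtain rfl : x = u := hx.1.resolve_right hx.2
  -- the side of `p` avoiding `m` only meets monitors of `M \ {m}`, so it crosses `F`
  obtain ⟨m₁, hm₁, m₂, hm₂, -, w₁, w₂, hw₁₂, hw₁p, hw₂p⟩ := exists_sides_of_mem_csp hp hxp
  have hside {t : V} (ht : t ∈ M) (w : G.Walk x t) (hmw : m ∉ w.support)
      (hwp : ∀ y ∈ w.support, Traverses p y) : False := by
    obtain ⟨y, hyw, hyF⟩ := hsep t ht w fun y hy hyM =>
      ⟨hyM, fun h => hmw (Set.mem_singleton_iff.1 h ▸ hy)⟩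
    exact hpF y hyF (hwp y hyw)
  by_cases hmw₁ : m ∈ w₁.support
  · exact hside hm₂ w₂ (fun hmw₂ => hu (hw₁₂ m hmw₁ hmw₂ ▸ hm)) hw₂p
  · exact hside hm₁ w₁ hmw₁ hw₁p

end UpperBound

/-- Maximum identifiability under CSP: with `δ_M = min_{m ∈ M} δ(G_m)`, if
`min(δ_M, δ(G*) − 1) ≤ σ − 2` then
`min(δ_M − 1, δ(G*) − 2) ≤ Ω_CSP(G) ≤ min(δ_M, δ(G*) − 1)`. -/
theorem stmt_18 {V : Type*} [Fintype V] (G : SimpleGraph V) (hG : G.Connected)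
    (M : Set V) (hM : M.Nonempty) (δM : ℕ)
    (hδM : δM = sInf { d : ℕ | ∃ m ∈ M,
      d = vertexConnectivity (StarGraph G Mᶜ (M \ {m})) })
    (h : min (δM : ℤ) ((vertexConnectivity (StarGraph G Mᶜ M) : ℤ) - 1) ≤
      (Mᶜ.ncard : ℤ) - 2) :
    min ((δM : ℤ) - 1) ((vertexConnectivity (StarGraph G Mᶜ M) : ℤ) - 2) ≤
        (maxIdent (CSP G M) Mᶜ : ℤ) ∧
      (maxIdent (CSP G M) Mᶜ : ℤ) ≤
        min (δM : ℤ) ((vertexConnectivity (StarGraph G Mᶜ M) : ℤ) - 1) := by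
  set δs := vertexConnectivity (StarGraph G Mᶜ M)
  have hδM_le (m : V) (hm : m ∈ M) : δM ≤ vertexConnectivity (StarGraph G Mᶜ (M \ {m})) :=
    hδM ▸ Nat.sInf_le ⟨m, hm, rfl⟩
  obtain ⟨m₀, hm₀, hδM_eq⟩ : ∃ m ∈ M, δM = vertexConnectivity (StarGraph G Mᶜ (M \ {m})) := by
    obtain ⟨m, hm⟩ := hM
    have hne : {d | ∃ m ∈ M, d = vertexConnectivity (StarGraph G Mᶜ (M \ {m}))}.Nonempty :=
      ⟨_, m, hm, rfl⟩
    exact hδM ▸ Nat.sInf_mem hne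
  have hN : Mᶜ.Nonempty := by
    have := vertexConnectivity_starGraph_le (G := G) (M := M) M
    have := vertexConnectivity_starGraph_le (G := G) (M := M) (M \ {m₀})
    exact Set.nonempty_of_ncard_ne_zero (by omega)
  have hδs : 1 ≤ δs := one_le_vertexConnectivity_starGraph hG hM hN
  have hupper : maxIdent (CSP G M) Mᶜ ≤ min δM (δs - 1) := maxIdent_le fun k hk => by
    by_contra! hkU
    rcases le_total δM (δs - 1) with hle | hle
    · exact not_identifiable_csp_vertexConnectivity_diff_add_one hm₀ (by omega)
        (hk.mono (by omega))
    · exact not_identifiable_csp_vertexConnectivity hδs (by omega) (hk.mono (by omega))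
  have hlower : min δM (δs - 1) - 1 ≤ maxIdent (CSP G M) Mᶜ := by
    rcases Nat.eq_zero_or_pos (min δM (δs - 1)) with h0 | hpos
    · simp [h0]
    · exact le_maxIdent (by omega) (identifiable_csp (by omega) fun m hm => by
        have := hδM_le m hm
        omega)
  omega
end
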